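/- arXiv:1201.4662 — 2 statements merged into one kernel-verified Lean document; each statement's English description precedes it below -/
import Mathlib

section
/- Let M be a connected simple matroid of rank 3 on a finite ground set E with rank function r. Suppose x, y ∈ E are distinct elements such that every facet-defining flat F of rank 2 of M contains x if and only if it contains y, and such that r(E \ {x,y}) = 3. Then M is 2-decomposable by the hyperplane ({x,y},1)_=. -/
/-!
If `I ⊆ E \ {x, y}` is a pair and `x ∈ cl I`, the line `cl I` has at least three points, so in a
simple matroid of rank 3 it is a facet-defining flat: its restriction is `U_{2,k}` with `k ≥ 3`
and its contraction is a loopless matroid of rank 1. Hence `x ∈ cl I ↔ y ∈ cl I`, which says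
that the transposition `(x y)` maps bases to bases, i.e. is an automorphism of `M`.
For such a pair, the bases meeting `{x, y}` at most once are the bases of `M` with `y` replaced
by a parallel copy of `x`, which is a matroid as soon as `y` is not a coloop. Applied to `M✶`
and dualised, the same construction realises the bases meeting `{x, y}`.
-/

open Set Matroid

namespace PaperWMO

variable {α : Type*}

/-- The rank of a set `X` in a matroid `M`: the size of a largest independent subset of `X`. -/
noncomputable def rk (M : Matroid α) (X : Set α) : ℕ :=
  sSup {n : ℕ | ∃ I, M.Indep I ∧ I ⊆ X ∧ I.ncard = n}

/-- Contraction of the set `C` in the matroid `M`, defined by duality: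
`M / C = (M✶ \ C)✶`, where deletion is restriction to the complement. -/
noncomputable def contract (M : Matroid α) (C : Set α) : Matroid α :=
  (M✶ ↾ (M.E \ C))✶

/-- A matroid is connected if its ground set is nonempty and it is not the direct sum of
two matroids on nonempty disjoint ground sets. -/
def Conn (M : Matroid α) : Prop :=
  M.E.Nonempty ∧ ¬ ∃ (M₁ M₂ : Matroid α) (h : Disjoint M₁.E M₂.E),
    M₁.E.Nonempty ∧ M₂.E.Nonempty ∧ M = Matroid.disjointSum M₁ M₂ h

/-- A flat of `M`: a subset `F` of the ground set such that any superset
`B` with `F ⊆ B ⊆ M.E` of the same rank equals `F`. -/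
def IsFlat (M : Matroid α) (F : Set α) : Prop :=
  F ⊆ M.E ∧ ∀ B : Set α, F ⊆ B → B ⊆ M.E → rk M B = rk M F → B = F

/-- A matroid is simple if every subset of the ground set with at most two elements
is independent. -/
def IsSimple (M : Matroid α) : Prop :=
  ∀ X ⊆ M.E, X.ncard ≤ 2 → M.Indep X

/-- A facet-defining flat of rank 2: a flat `F` of rank 2 such that
both the restriction `M ↾ F` and the contraction `M / F` are connected. -/
def FacetFlat2 (M : Matroid α) (F : Set α) : Prop :=
  IsFlat M F ∧ rk M F = 2 ∧ Conn (M ↾ F) ∧ Conn (contract M F)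

/-- `M` is 2-decomposable by the hyperplane `(A, a)_=`. -/
def TwoDecomposableBy (M : Matroid α) (A : Set α) (a : ℕ) : Prop :=
  (∃ N₁ : Matroid α, N₁.E = M.E ∧
      ∀ B : Set α, N₁.IsBase B ↔ M.IsBase B ∧ (B ∩ A).ncard ≤ a) ∧
  (∃ N₂ : Matroid α, N₂.E = M.E ∧
      ∀ B : Set α, N₂.IsBase B ↔ M.IsBase B ∧ a ≤ (B ∩ A).ncard) ∧
  (∃ B : Set α, M.IsBase B ∧ a < (B ∩ A).ncard) ∧
  (∃ B : Set α, M.IsBase B ∧ (B ∩ A).ncard < a)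

/-- A 3-partition in `M`: a partition of the ground set into three parts, each of size
at least two, such that no facet-defining flat of rank 2 meets all three parts, and the
union of any two parts has rank 3. -/
def ThreePartition (M : Matroid α) (A₁ A₂ A₃ : Set α) : Prop :=
  A₁ ∪ A₂ ∪ A₃ = M.E ∧
  Disjoint A₁ A₂ ∧ Disjoint A₂ A₃ ∧ Disjoint A₁ A₃ ∧
  2 ≤ A₁.ncard ∧ 2 ≤ A₂.ncard ∧ 2 ≤ A₃.ncard ∧
  (¬ ∃ F : Set α, FacetFlat2 M F ∧
      (F ∩ A₁).Nonempty ∧ (F ∩ A₂).Nonempty ∧ (F ∩ A₃).Nonempty) ∧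
  rk M (A₁ ∪ A₂) = 3 ∧ rk M (A₂ ∪ A₃) = 3 ∧ rk M (A₃ ∪ A₁) = 3

/-- The adjacency relation of the graph `g(A, B)` (with respect to the matroid `M`):
the vertex set is `B`, and distinct `x, y ∈ B` are adjacent iff some facet-defining flat
of rank 2 of `M` contains both `x` and `y` and meets `A`. -/
def gAdj (M : Matroid α) (A B : Set α) (x y : α) : Prop :=
  x ∈ B ∧ y ∈ B ∧ x ≠ y ∧
    ∃ F : Set α, FacetFlat2 M F ∧ x ∈ F ∧ y ∈ F ∧ (F ∩ A).Nonempty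

/-- `C` is the vertex set of a connected component of the graph `g(S, V)`. -/
def IsGComponent (M : Matroid α) (S V C : Set α) : Prop :=
  ∃ x ∈ V, C = {y | y ∈ V ∧ Relation.ReflTransGen (gAdj M S V) x y}

lemma rk_eq_eRk (M : Matroid α) [M.RankFinite] (X : Set α) : (rk M X : ℕ∞) = M.eRk X := by
  obtain ⟨I, hI⟩ := M.exists_isBasis' X
  have hle : ∀ n ∈ {n : ℕ | ∃ J, M.Indep J ∧ J ⊆ X ∧ J.ncard = n}, n ≤ I.ncard := by
    rintro _ ⟨J, hJ, hJX, rfl⟩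
    have hJI := hJ.encard_le_eRk_of_subset hJX
    rw [← hI.encard_eq_eRk, ← hJ.finite.cast_ncard_eq, ← hI.indep.finite.cast_ncard_eq] at hJI
    exact_mod_cast hJI
  have hrk : rk M X = I.ncard :=
    le_antisymm (csSup_le ⟨0, ∅, M.empty_indep, empty_subset X, ncard_empty α⟩ hle)
      (le_csSup ⟨_, hle⟩ ⟨I, hI.indep, hI.subset, rfl⟩)
  rw [hrk, hI.indep.finite.cast_ncard_eq, hI.encard_eq_eRk]

lemma isFlat_of_matroid_isFlat {M : Matroid α} [M.RankFinite] {F : Set α} (hF : M.IsFlat F) :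
    IsFlat M F := by
  refine ⟨hF.subset_ground, fun B hFB hBE hBF => ?_⟩
  have hcl : M.closure F = M.closure B :=
    (M.isRkFinite_set F).closure_eq_closure_of_subset_of_eRk_ge_eRk hFB
      (by rw [← rk_eq_eRk, ← rk_eq_eRk, hBF])
  exact (M.subset_closure B hBE).trans (hcl ▸ hF.closure).subset |>.antisymm hFB

lemma IsSimple.indep_of_encard_le {M : Matroid α} (hM : IsSimple M) {X : Set α} (hX : X ⊆ M.E)
    (hX2 : X.encard ≤ 2) : M.Indep X := by
  have hfin : X.Finite := finite_of_encard_le_coe hX2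
  exact hM X hX (by rw [← Nat.cast_le (α := ℕ∞), hfin.cast_ncard_eq]; exact hX2)

lemma IsBase.encard_inter_eq_of_disjointSum {M₁ M₂ : Matroid α} {h : Disjoint M₁.E M₂.E}
    {B B' : Set α} (hB : (M₁.disjointSum M₂ h).IsBase B) (hB' : (M₁.disjointSum M₂ h).IsBase B') :
    (B ∩ M₁.E).encard = (B' ∩ M₁.E).encard ∧ (B ∩ M₂.E).encard = (B' ∩ M₂.E).encard := by
  rw [disjointSum_isBase_iff] at hB hB'
  exact ⟨hB.1.encard_eq_encard_of_isBase hB'.1, hB.2.1.encard_eq_encard_of_isBase hB'.2.1⟩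

lemma conn_of_forall_isBase_singleton {N : Matroid α} (hne : N.E.Nonempty)
    (hN : ∀ e ∈ N.E, N.IsBase {e}) : Conn N := by
  refine ⟨hne, ?_⟩
  rintro ⟨M₁, M₂, hd, ⟨e, he⟩, ⟨f, hf⟩, rfl⟩
  simp only [disjointSum_ground_eq] at hN
  have h := (IsBase.encard_inter_eq_of_disjointSum (hN e (.inl he)) (hN f (.inr hf))).2
  rw [singleton_inter_eq_empty.2 (hd.notMem_of_mem_left he),
    inter_eq_left.2 (singleton_subset_iff.2 hf)] at h
  simp at h

lemma conn_of_forall_isBase_pair {N : Matroid α} (hN3 : 2 < N.E.encard)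
    (hN : ∀ u ∈ N.E, ∀ v ∈ N.E, u ≠ v → N.IsBase {u, v}) : Conn N := by
  refine ⟨nonempty_of_encard_ne_zero (by rintro h; simp [h] at hN3), ?_⟩
  rintro ⟨M₁, M₂, hd, ⟨e, he⟩, ⟨f, hf⟩, rfl⟩
  simp only [disjointSum_ground_eq] at hN hN3
  have hef : e ≠ f := fun h => hd.notMem_of_mem_left he (h ▸ hf)
  obtain ⟨g, hg, hgef⟩ : ∃ g ∈ M₁.E ∪ M₂.E, g ∉ ({e, f} : Set α) :=
    not_subset.1 fun h => (encard_le_encard h).not_gt (by rwa [encard_pair hef])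
  have hbase := hN e (.inl he) f (.inr hf) hef
  rcases hg with hg | hg
  · have h := (IsBase.encard_inter_eq_of_disjointSum hbase
      (hN e (.inl he) g (.inl hg) (by rintro rfl; simp at hgef))).2
    simp [insert_inter_of_notMem, hd.notMem_of_mem_left, he, hf, hg] at h
  · have h := (IsBase.encard_inter_eq_of_disjointSum hbase
      (hN g (.inr hg) f (.inr hf) (by rintro rfl; simp at hgef))).1
    simp [insert_inter_of_mem, insert_inter_of_notMem, hd.notMem_of_mem_right, he, hf, hg] at h

lemma contract_eq_matroid_contract (M : Matroid α) (C : Set α) : contract M C = M ／ C := rfl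

section Line

variable {M : Matroid α} {I : Set α}

lemma isBase_restrict_closure_pair (hs : IsSimple M) (hI : M.Indep I) (hI2 : I.encard = 2)
    {u v : α} (hu : u ∈ M.closure I) (hv : v ∈ M.closure I) (huv : u ≠ v) :
    (M ↾ M.closure I).IsBase {u, v} := by
  have hE := M.closure_subset_ground I
  have huvI : M.Indep {u, v} :=
    hs.indep_of_encard_le (pair_subset (hE hu) (hE hv)) (encard_pair huv).le
  rw [isBase_restrict_iff hE]
  refine huvI.isBasis_of_eRk_ge (toFinite _) (pair_subset hu hv) ?_
  rw [eRk_closure_eq, hI.eRk_eq_encard, huvI.eRk_eq_encard, encard_pair huv, hI2]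

lemma isBase_contract_closure_singleton (hM : M.eRank = 3) (hI : M.Indep I) (hI2 : I.encard = 2)
    {e : α} (he : e ∈ M.E \ M.closure I) : (M ／ M.closure I).IsBase {e} := by
  have heI : e ∉ I := fun h => he.2 (M.subset_closure I hI.subset_ground h)
  have hindep : M.Indep (insert e I) := (hI.insert_indep_iff_of_notMem heI).2 he
  have hbase : M.IsBase (insert e I) := hindep.isBase_of_eRk_ge
    ((finite_of_encard_eq_coe hI2).insert e)
    (by rw [hindep.eRk_eq_encard, encard_insert_of_notMem heI, hI2, hM]; rfl)
  have hcontract : (M ／ I).IsBase {e} :=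
    hI.contract_isBase_iff.2 ⟨by rwa [singleton_union], disjoint_singleton_left.2 heI⟩
  rw [hI.isBasis_closure.contract_eq_contract_delete, delete_isBase_iff]
  exact hcontract.isBasis_ground.isBasis_subset
    (singleton_subset_iff.2 ⟨⟨he.1, heI⟩, fun h => he.2 h.1⟩) sdiff_subset

lemma facetFlat2_closure [M.RankFinite] (hM : M.eRank = 3) (hs : IsSimple M) (hI : M.Indep I)
    (hI2 : I.encard = 2) {e : α} (he : e ∈ M.closure I \ I) : FacetFlat2 M (M.closure I) := by
  have hL : M.eRk (M.closure I) = 2 := by rw [eRk_closure_eq, hI.eRk_eq_encard, hI2]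
  refine ⟨isFlat_of_matroid_isFlat (M.isFlat_closure I),
    by exact_mod_cast (rk_eq_eRk M _).trans hL, ?_, ?_⟩
  · refine conn_of_forall_isBase_pair ?_
      fun u hu v hv huv => isBase_restrict_closure_pair hs hI hI2 hu hv huv
    calc (2 : ℕ∞) < (insert e I).encard := by rw [encard_insert_of_notMem he.2, hI2]; norm_num
      _ ≤ (M.closure I).encard :=
        encard_le_encard (insert_subset he.1 (M.subset_closure I hI.subset_ground))
  · obtain ⟨B, hB⟩ := M.exists_isBase
    obtain ⟨f, hfB, hfL⟩ : ∃ f ∈ B, f ∉ M.closure I := not_subset.1 fun h => by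
      have hle := hB.indep.encard_le_eRk_of_subset h
      rw [hB.encard_eq_eRank, hM, hL] at hle
      exact absurd hle (by decide)
    rw [contract_eq_matroid_contract]
    exact conn_of_forall_isBase_singleton ⟨f, hB.subset_ground hfB, hfL⟩
      fun f hf => isBase_contract_closure_singleton hM hI hI2 hf

lemma mem_closure_iff_of_forall_facetFlat2 [M.RankFinite] (hM : M.eRank = 3) (hs : IsSimple M)
    {x y : α} (hsame : ∀ F : Set α, FacetFlat2 M F → (x ∈ F ↔ y ∈ F))
    (hI : I ⊆ M.E \ {x, y}) (hI2 : I.encard = 2) : x ∈ M.closure I ↔ y ∈ M.closure I := by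
  have hIi := hs.indep_of_encard_le (hI.trans sdiff_subset) hI2.le
  refine ⟨fun hxI => (hsame _ (facetFlat2_closure hM hs hIi hI2 ⟨hxI, ?_⟩)).1 hxI,
    fun hyI => (hsame _ (facetFlat2_closure hM hs hIi hI2 ⟨hyI, ?_⟩)).2 hyI⟩
  exacts [fun h => (hI h).2 (.inl rfl), fun h => (hI h).2 (.inr rfl)]

end Line

lemma image_swap_eq_self [DecidableEq α] {x y : α} {s : Set α} (h : x ∈ s ↔ y ∈ s) :
    Equiv.swap x y '' s = s := by
  ext z
  rw [Equiv.image_eq_preimage_symm, Equiv.symm_swap, mem_preimage, Equiv.swap_apply_def]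
  split_ifs with hzx hzy
  · subst hzx; exact h.symm
  · subst hzy; exact h
  · rfl

section Swap

variable {M : Matroid α} {x y : α} {B : Set α}

lemma IsBase.isBase_insert_sdiff_of_closure (hB : M.IsBase B) (hB3 : B.encard = 3) (hxB : x ∈ B)
    (hy : y ∈ M.E \ B)
    (hcl : ∀ I ⊆ M.E \ {x, y}, I.encard = 2 → y ∈ M.closure I → x ∈ M.closure I) :
    M.IsBase (insert y (B \ {x})) := by
  have hIsub : B \ {x} ⊆ M.E \ {x, y} := fun z hz =>
    ⟨hB.subset_ground hz.1, by rintro (rfl | rfl); exacts [hz.2 rfl, hy.2 hz.1]⟩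
  have hI2 : (B \ {x}).encard = 2 := by rw [encard_sdiff_singleton_of_mem hxB, hB3]; rfl
  refine hB.exchange_isBase_of_indep hy.2
    (((hB.indep.subset sdiff_subset).insert_indep_iff_of_notMem fun h => hy.2 h.1).2 ⟨hy.1, ?_⟩)
  exact fun hycl => hB.indep.notMem_closure_sdiff_of_mem hxB (hcl _ hIsub hI2 hycl)

variable [DecidableEq α]

lemma isBase_image_swap (hM : M.eRank = 3) (hx : x ∈ M.E) (hy : y ∈ M.E)
    (hcl : ∀ I ⊆ M.E \ {x, y}, I.encard = 2 → (x ∈ M.closure I ↔ y ∈ M.closure I))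
    (hB : M.IsBase B) : M.IsBase (Equiv.swap x y '' B) := by
  have hB3 : B.encard = 3 := hB.encard_eq_eRank.trans hM
  by_cases hxB : x ∈ B <;> by_cases hyB : y ∈ B
  · rwa [image_swap_eq_self (iff_of_true hxB hyB)]
  · rw [Equiv.image_swap_of_mem_of_notMem hxB hyB,
      ← insert_sdiff_singleton_comm (ne_of_mem_of_not_mem hxB hyB).symm]
    exact IsBase.isBase_insert_sdiff_of_closure hB hB3 hxB ⟨hy, hyB⟩
      fun I hI hI2 => (hcl I hI hI2).2
  · rw [Equiv.swap_comm, Equiv.image_swap_of_mem_of_notMem hyB hxB,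
      ← insert_sdiff_singleton_comm (ne_of_mem_of_not_mem hyB hxB).symm]
    refine IsBase.isBase_insert_sdiff_of_closure hB hB3 hyB ⟨hx, hxB⟩ fun I hI hI2 => ?_
    exact (hcl I (by rwa [pair_comm]) hI2).1
  · rwa [image_swap_eq_self (iff_of_false hxB hyB)]

lemma mapEquiv_swap_eq_self (hM : M.eRank = 3) (hx : x ∈ M.E) (hy : y ∈ M.E)
    (hcl : ∀ I ⊆ M.E \ {x, y}, I.encard = 2 → (x ∈ M.closure I ↔ y ∈ M.closure I)) :
    M.mapEquiv (Equiv.swap x y) = M := by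
  refine ext_isBase (image_swap_eq_self (iff_of_true hx hy)) fun B _ => ?_
  rw [mapEquiv_isBase_iff, Equiv.symm_swap]
  refine ⟨fun h => ?_, isBase_image_swap hM hx hy hcl⟩
  simpa [image_image] using isBase_image_swap hM hx hy hcl h

lemma isBase_image_swap_iff (hσ : M.mapEquiv (Equiv.swap x y) = M) :
    M.IsBase (Equiv.swap x y '' B) ↔ M.IsBase B := by
  conv_rhs => rw [← hσ, mapEquiv_isBase_iff, Equiv.symm_swap]

end Swap

section Decomposition

variable {M : Matroid α} {x y : α} [DecidableEq α]

lemma exists_isBase_iff_not_pair_subset (hxy : x ≠ y) (hσ : M.mapEquiv (Equiv.swap x y) = M)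
    (hy : M.Coindep {y}) :
    ∃ N : Matroid α, N.E = M.E ∧ ∀ B, N.IsBase B ↔ M.IsBase B ∧ ¬ {x, y} ⊆ B := by
  let f : α → α := Function.update id y x
  have hsurj : SurjOn f M.E (M ＼ {y}).E := fun e he =>
    ⟨e, he.1, Function.update_of_ne he.2 _ _⟩
  refine ⟨(M ＼ {y}).comapOn M.E f, rfl, fun B => ?_⟩
  rw [comapOn_isBase_iff_of_surjOn hsurj, hy.delete_isBase_iff]
  by_cases hyB : y ∈ B
  · by_cases hxB : x ∈ B
    · have hinj : ¬ InjOn f B := fun h => hxy (h hxB hyB (by simp [f, hxy]))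
      exact iff_of_false (fun h => hinj h.2.1) fun h => h.2 (pair_subset hxB hyB)
    · have heq : EqOn f (Equiv.swap x y) B := fun z hz => by
        by_cases hzy : z = y
        · simp [f, hzy]
        · simp [f, hzy, Equiv.swap_apply_of_ne_of_ne (ne_of_mem_of_not_mem hz hxB) hzy]
      rw [heq.image_eq, heq.injOn_iff, isBase_image_swap_iff hσ]
      have hyσ : y ∉ Equiv.swap x y '' B := by
        rw [Equiv.image_eq_preimage_symm, Equiv.symm_swap, mem_preimage, Equiv.swap_apply_right]
        exact hxB
      exact ⟨fun h => ⟨h.1.1, fun h' => hxB (h' (.inl rfl))⟩, fun h =>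
        ⟨⟨h.1, disjoint_singleton_right.2 hyσ⟩, (Equiv.swap x y).injective.injOn,
          h.1.subset_ground⟩⟩
  · have heq : EqOn f id B := fun z hz => Function.update_of_ne (ne_of_mem_of_not_mem hz hyB) _ _
    rw [heq.image_eq, image_id, heq.injOn_iff]
    exact ⟨fun h => ⟨h.1.1, fun h' => hyB (h' (.inr rfl))⟩, fun h =>
      ⟨⟨h.1, disjoint_singleton_right.2 hyB⟩, injOn_id B, h.1.subset_ground⟩⟩

lemma exists_isBase_iff_not_disjoint_pair (hxy : x ≠ y) (hx : x ∈ M.E)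
    (hσ : M.mapEquiv (Equiv.swap x y) = M) (hy : M.Indep {y}) :
    ∃ N : Matroid α, N.E = M.E ∧ ∀ B, N.IsBase B ↔ M.IsBase B ∧ ¬ Disjoint B {x, y} := by
  have hσdual : M✶.mapEquiv (Equiv.swap x y) = M✶ := by
    have h := congrArg Matroid.dual hσ
    rwa [mapEquiv_eq_map, map_dual] at h
  obtain ⟨N, hNE, hN⟩ := exists_isBase_iff_not_pair_subset hxy hσdual (dual_coindep_iff.2 hy)
  refine ⟨N✶, hNE, fun B => ?_⟩
  rw [dual_isBase_iff', hN, hNE, dual_isBase_iff']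
  by_cases hB : B ⊆ M.E
  · simp [hB, sdiff_sdiff_cancel_left hB, subset_sdiff, pair_subset hx (hy.subset_ground rfl),
      disjoint_comm]
  · exact iff_of_false (fun h => hB h.2) fun h => hB h.1.subset_ground

end Decomposition

lemma ncard_inter_pair_le_one_iff {x y : α} (hxy : x ≠ y) {B : Set α} :
    (B ∩ {x, y}).ncard ≤ 1 ↔ ¬ {x, y} ⊆ B := by
  rw [← inter_eq_right]
  refine ⟨fun h heq => ?_, fun hne => ?_⟩
  · rw [heq, ncard_pair hxy] at h
    omega
  · have hlt := ncard_lt_ncard (inter_subset_right.ssubset_of_ne hne) (toFinite {x, y})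
    rw [ncard_pair hxy] at hlt
    omega

lemma one_le_ncard_inter_pair_iff {x y : α} {B : Set α} :
    1 ≤ (B ∩ {x, y}).ncard ↔ ¬ Disjoint B {x, y} := by
  rw [Nat.one_le_iff_ne_zero, Ne, ncard_eq_zero (toFinite _), disjoint_iff_inter_eq_empty]

theorem twoDecomposable_of_parallel_facets_general (M : Matroid α) (hfin : M.E.Finite)
    (hsimple : IsSimple M) (hrank : rk M M.E = 3)
    (x y : α) (hx : x ∈ M.E) (hy : y ∈ M.E) (hxy : x ≠ y)
    (hsame : ∀ F : Set α, FacetFlat2 M F → (x ∈ F ↔ y ∈ F))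
    (hr : rk M (M.E \ {x, y}) = 3) :
    TwoDecomposableBy M {x, y} 1 := by
  classical
  have : M.Finite := ⟨hfin⟩
  have h3 : M.eRank = 3 := by rw [← eRk_ground, ← rk_eq_eRk, hrank]; rfl
  have hspan : M.Spanning (M.E \ {x, y}) := by
    rw [spanning_iff_eRk_le, ← rk_eq_eRk, hr, h3]; rfl
  obtain ⟨B₀, hB₀, hB₀xy⟩ := hspan.exists_isBase_subset
  have hσ := mapEquiv_swap_eq_self h3 hx hy
    fun I hI hI2 => mem_closure_iff_of_forall_facetFlat2 h3 hsimple hsame hI hI2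
  have hyCoindep : M.Coindep {y} := (coindep_iff_exists (singleton_subset_iff.2 hy)).2
    ⟨B₀, hB₀, hB₀xy.trans (sdiff_subset_sdiff_right (by simp))⟩
  obtain ⟨N₁, hN₁E, hN₁⟩ := exists_isBase_iff_not_pair_subset hxy hσ hyCoindep
  obtain ⟨N₂, hN₂E, hN₂⟩ := exists_isBase_iff_not_disjoint_pair hxy hx hσ
    (hsimple.indep_of_encard_le (singleton_subset_iff.2 hy) (by simp))
  obtain ⟨B₁, hB₁, hxyB₁⟩ :=
    (hsimple.indep_of_encard_le (pair_subset hx hy) (encard_pair hxy).le).exists_isBase_superset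
  refine ⟨⟨N₁, hN₁E, fun B => by rw [hN₁, ncard_inter_pair_le_one_iff hxy]⟩,
    ⟨N₂, hN₂E, fun B => by rw [hN₂, one_le_ncard_inter_pair_iff]⟩, ⟨B₁, hB₁, ?_⟩, ⟨B₀, hB₀, ?_⟩⟩
  · rw [inter_eq_right.2 hxyB₁, ncard_pair hxy]
    norm_num
  · rw [disjoint_iff_inter_eq_empty.1 (subset_sdiff.1 hB₀xy).2, ncard_empty]
    norm_num

/-- If two distinct elements `x, y` lie in exactly the same facet-defining flats of rank 2
and `r(E \ {x,y}) = 3`, then `M` is 2-decomposable by the hyperplane `({x,y},1)_=`. -/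
theorem twoDecomposable_of_parallel_facets (M : Matroid α) (hfin : M.E.Finite)
    (hconn : Conn M) (hsimple : IsSimple M) (hrank : rk M M.E = 3)
    (x y : α) (hx : x ∈ M.E) (hy : y ∈ M.E) (hxy : x ≠ y)
    (hsame : ∀ F : Set α, FacetFlat2 M F → (x ∈ F ↔ y ∈ F))
    (hr : rk M (M.E \ {x, y}) = 3) :
    TwoDecomposableBy M {x, y} 1 :=
  twoDecomposable_of_parallel_facets_general M hfin hsimple hrank x y hx hy hxy hsame hr

end PaperWMO
end

section
/- Let M be a connected simple matroid of rank 3 on a finite ground set E, and let {A1, A2, A3} be a 3-partition in M. Let 𝓕 denote the (finite) set of facet-defining flats of rank 2 of M. Then the sum over F ∈ 𝓕 of f(|F|) is at most e(|A1|) + e(|A2|) + e(|A3|), where e(k) = k(k−1)/2 and f(n) = ⌊n/2⌋ · ⌊(n−1)/2⌋. -/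
open Set Matroid

/-! Two distinct rank-2 flats of a simple matroid share at most one point, so a 2-subset of a
part `Aᵢ` lies in at most one facet-defining flat and `∑_F e(|F ∩ Aᵢ|) ≤ e(|Aᵢ|)`. A
facet-defining flat `F` meets at most two parts, so it splits as `|F| = a + b` with
`f(|F|) ≤ e(a) + e(b)`; summing over `F` gives the bound. -/

lemma Nat.div_two_mul_pred_div_two_add_two (n : ℕ) :
    (n + 2) / 2 * ((n + 2 - 1) / 2) = n / 2 * ((n - 1) / 2) + n := by
  rcases n with _ | n
  · rfl
  have hsum : (n + 1) / 2 + n / 2 = n := by omega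
  rw [show (n + 1 + 2) / 2 = (n + 1) / 2 + 1 by omega,
    show (n + 1 + 2 - 1) / 2 = n / 2 + 1 by omega, Nat.add_sub_cancel]
  linarith

lemma Nat.div_two_mul_pred_div_two_le_choose_two (n : ℕ) :
    n / 2 * ((n - 1) / 2) ≤ n.choose 2 := by
  rw [Nat.choose_two_right, Nat.le_div_iff_mul_le two_pos, mul_assoc]
  exact Nat.mul_le_mul (Nat.div_le_self _ _) (Nat.div_mul_le_self _ _)

lemma Nat.div_two_mul_pred_div_two_le_choose_two_add (a b : ℕ) :
    (a + b) / 2 * ((a + b - 1) / 2) ≤ a.choose 2 + b.choose 2 := by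
  have succ_choose_two (m : ℕ) : (m + 1).choose 2 = m.choose 2 + m := by
    rw [Nat.choose_succ_succ', Nat.choose_one_right, add_comm]
  induction a generalizing b with
  | zero => simpa using Nat.div_two_mul_pred_div_two_le_choose_two b
  | succ a ih =>
    rcases b with _ | b
    · simpa using Nat.div_two_mul_pred_div_two_le_choose_two (a + 1)
    rw [show a + 1 + (b + 1) = a + b + 2 by ring, Nat.div_two_mul_pred_div_two_add_two,
      succ_choose_two, succ_choose_two]
    have := ih b
    omega

section

variable {α : Type*}

lemma div_two_mul_pred_div_two_ncard_le_of_subset_union {F B C : Set α} (hF : F.Finite)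
    (hFBC : F ⊆ B ∪ C) (hBC : Disjoint B C) :
    F.ncard / 2 * ((F.ncard - 1) / 2) ≤ (F ∩ B).ncard.choose 2 + (F ∩ C).ncard.choose 2 := by
  have hsplit : (F ∩ B).ncard + (F ∩ C).ncard = F.ncard := by
    rw [← ncard_union_eq (hBC.mono inter_subset_right inter_subset_right) (hF.inter_of_left B)
      (hF.inter_of_left C), ← inter_union_distrib_left, inter_eq_left.2 hFBC]
  exact hsplit ▸ Nat.div_two_mul_pred_div_two_le_choose_two_add _ _

lemma div_two_mul_pred_div_two_ncard_le_of_not_meets_all {F A₁ A₂ A₃ : Set α}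
    (hF : F.Finite) (hcover : F ⊆ A₁ ∪ A₂ ∪ A₃) (h12 : Disjoint A₁ A₂)
    (h23 : Disjoint A₂ A₃) (h13 : Disjoint A₁ A₃)
    (hmiss : ¬ ((F ∩ A₁).Nonempty ∧ (F ∩ A₂).Nonempty ∧ (F ∩ A₃).Nonempty)) :
    F.ncard / 2 * ((F.ncard - 1) / 2) ≤
      (F ∩ A₁).ncard.choose 2 + (F ∩ A₂).ncard.choose 2 + (F ∩ A₃).ncard.choose 2 := by
  simp only [not_and_or, not_nonempty_iff_eq_empty, ← disjoint_iff_inter_eq_empty] at hmiss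
  rcases hmiss with h | h | h
  · have hF23 : F ⊆ A₂ ∪ A₃ :=
      Disjoint.subset_right_of_subset_union (union_assoc .. ▸ hcover) h
    simpa [disjoint_iff_inter_eq_empty.1 h, add_assoc] using
      div_two_mul_pred_div_two_ncard_le_of_subset_union hF hF23 h23
  · have hF13 : F ⊆ A₁ ∪ A₃ :=
      Disjoint.subset_left_of_subset_union (union_right_comm .. ▸ hcover) h
    simpa [disjoint_iff_inter_eq_empty.1 h] using
      div_two_mul_pred_div_two_ncard_le_of_subset_union hF hF13 h13
  · have hF12 : F ⊆ A₁ ∪ A₂ := Disjoint.subset_left_of_subset_union hcover h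
    simpa [disjoint_iff_inter_eq_empty.1 h] using
      div_two_mul_pred_div_two_ncard_le_of_subset_union hF hF12 h12

lemma sum_choose_two_ncard_inter_le {A : Set α} (𝓕 : Finset (Set α)) (hA : A.Finite)
    (h𝓕 : (𝓕 : Set (Set α)).Pairwise fun F F' ↦ (F ∩ F').Subsingleton) :
    ∑ F ∈ 𝓕, (F ∩ A).ncard.choose 2 ≤ A.ncard.choose 2 := by
  let pairs : Set α → Set (Set α) := fun S ↦ {t ⊆ S | t.ncard = 2}
  have hpairs (S : Set α) (hS : S.Finite) : (pairs S).Finite :=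
    hS.finite_subsets.subset fun _ ht ↦ ht.1
  have hdisj : (𝓕 : Set (Set α)).PairwiseDisjoint fun F ↦ pairs (F ∩ A) := by
    intro F hF F' hF' hne
    refine Set.disjoint_left.2 fun t ⟨htF, ht2⟩ ⟨htF', _⟩ ↦ ?_
    obtain ⟨x, y, hxy, rfl⟩ := ncard_eq_two.1 ht2
    exact hxy <| h𝓕 hF hF' hne ⟨(htF (by simp)).1, (htF' (by simp)).1⟩
      ⟨(htF (by simp)).1, (htF' (by simp)).1⟩
  calc ∑ F ∈ 𝓕, (F ∩ A).ncard.choose 2 = ∑ F ∈ 𝓕, (pairs (F ∩ A)).ncard :=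
        Finset.sum_congr rfl fun F _ ↦ (ncard_powerset_ncard (hA.inter_of_right F) 2).symm
    _ = (⋃ F ∈ (𝓕 : Set (Set α)), pairs (F ∩ A)).ncard := by
        rw [𝓕.finite_toSet.ncard_biUnion (fun F _ ↦ hpairs _ (hA.inter_of_right F)) hdisj,
          finsum_mem_coe_finset]
    _ ≤ (pairs A).ncard :=
        ncard_le_ncard (iUnion₂_subset fun F _ t ht ↦ ⟨ht.1.trans inter_subset_right, ht.2⟩)
          (hpairs A hA)
    _ = A.ncard.choose 2 := ncard_powerset_ncard hA 2

end

namespace PaperWMO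

variable {α : Type*} {M : Matroid α} {F F' I X : Set α}

lemma rk_eq_ncard_of_isBasis' (hI : M.IsBasis' I X) (hIfin : I.Finite) : rk M X = I.ncard := by
  have hbound : ∀ n ∈ {n : ℕ | ∃ J, M.Indep J ∧ J ⊆ X ∧ J.ncard = n}, n ≤ I.ncard := by
    rintro _ ⟨J, hJ, hJX, rfl⟩
    have hle : J.encard ≤ I.encard := hI.encard_eq_eRk ▸ hJ.encard_le_eRk_of_subset hJX
    exact ENat.toNat_le_toNat hle hIfin.encard_lt_top.ne
  have hmem : I.ncard ∈ {n : ℕ | ∃ J, M.Indep J ∧ J ⊆ X ∧ J.ncard = n} :=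
    ⟨I, hI.indep, hI.subset, rfl⟩
  exact le_antisymm (csSup_le ⟨_, hmem⟩ hbound) (le_csSup ⟨_, hbound⟩ hmem)

lemma IsFlat.closure_eq (hfin : M.E.Finite) (hF : IsFlat M F) : M.closure F = F := by
  obtain ⟨I, hI⟩ := M.exists_isBasis F hF.1
  have hIfin := hfin.subset hI.indep.subset_ground
  refine hF.2 _ (M.subset_closure F hF.1) (M.closure_subset_ground F) ?_
  rw [rk_eq_ncard_of_isBasis' hI.isBasis_closure_right.isBasis' hIfin,
    rk_eq_ncard_of_isBasis' hI.isBasis' hIfin]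

lemma IsFlat.eq_closure_of_indep (hfin : M.E.Finite) (hF : IsFlat M F) (hI : M.Indep I)
    (hIF : I ⊆ F) (hrk : rk M F ≤ I.ncard) : F = M.closure I := by
  obtain ⟨J, hJ, hIJ⟩ := hI.subset_isBasis_of_subset hIF hF.1
  have hJfin := hfin.subset hJ.indep.subset_ground
  have hIJ : I = J :=
    eq_of_subset_of_ncard_le hIJ (rk_eq_ncard_of_isBasis' hJ.isBasis' hJfin ▸ hrk) hJfin
  rw [hIJ, hJ.closure_eq_closure, hF.closure_eq hfin]

lemma IsFlat.inter_subsingleton_of_rk_eq_two (hfin : M.E.Finite) (hsimple : IsSimple M)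
    (hF : IsFlat M F) (hF' : IsFlat M F') (hrF : rk M F = 2) (hrF' : rk M F' = 2)
    (hne : F ≠ F') : (F ∩ F').Subsingleton := by
  intro x hx y hy
  by_contra hxy
  have hpair : ({x, y} : Set α) ⊆ F ∩ F' := pair_subset hx hy
  have hI : M.Indep {x, y} :=
    hsimple _ (hpair.trans (inter_subset_left.trans hF.1)) (ncard_pair hxy).le
  refine hne ((hF.eq_closure_of_indep hfin hI (hpair.trans inter_subset_left) ?_).trans
    (hF'.eq_closure_of_indep hfin hI (hpair.trans inter_subset_right) ?_).symm)
  · rw [hrF, ncard_pair hxy]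
  · rw [hrF', ncard_pair hxy]

theorem three_partition_count_bound_general (M : Matroid α) (hfin : M.E.Finite)
    (hsimple : IsSimple M)
    (A₁ A₂ A₃ : Set α) (hpart : ThreePartition M A₁ A₂ A₃)
    (𝓕 : Finset (Set α)) (h𝓕 : ∀ F : Set α, F ∈ 𝓕 ↔ FacetFlat2 M F) :
    ∑ F ∈ 𝓕, (F.ncard / 2) * ((F.ncard - 1) / 2) ≤
      A₁.ncard * (A₁.ncard - 1) / 2 + A₂.ncard * (A₂.ncard - 1) / 2 +
        A₃.ncard * (A₃.ncard - 1) / 2 := by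
  obtain ⟨hcover, h12, h23, h13, -, -, -, hmeet, -, -, -⟩ := hpart
  have hpairwise : (𝓕 : Set (Set α)).Pairwise fun F F' ↦ (F ∩ F').Subsingleton := by
    intro F hF F' hF' hne
    obtain ⟨hFflat, hFrk, -⟩ := (h𝓕 F).1 hF
    obtain ⟨hF'flat, hF'rk, -⟩ := (h𝓕 F').1 hF'
    exact hFflat.inter_subsingleton_of_rk_eq_two hfin hsimple hF'flat hFrk hF'rk hne
  have hground : ∀ F ∈ 𝓕, F ⊆ A₁ ∪ A₂ ∪ A₃ := fun F hF ↦ hcover ▸ ((h𝓕 F).1 hF).1.1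
  have hpart_fin : ∀ A ⊆ A₁ ∪ A₂ ∪ A₃, A.Finite := fun A hA ↦ hfin.subset (hcover ▸ hA)
  calc ∑ F ∈ 𝓕, F.ncard / 2 * ((F.ncard - 1) / 2)
      ≤ ∑ F ∈ 𝓕, ((F ∩ A₁).ncard.choose 2 + (F ∩ A₂).ncard.choose 2 +
          (F ∩ A₃).ncard.choose 2) :=
        Finset.sum_le_sum fun F hF ↦
          div_two_mul_pred_div_two_ncard_le_of_not_meets_all (hpart_fin F (hground F hF))
            (hground F hF) h12 h23 h13 fun h ↦ hmeet ⟨F, (h𝓕 F).1 hF, h⟩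
    _ = ∑ F ∈ 𝓕, (F ∩ A₁).ncard.choose 2 + ∑ F ∈ 𝓕, (F ∩ A₂).ncard.choose 2 +
          ∑ F ∈ 𝓕, (F ∩ A₃).ncard.choose 2 := by
        rw [Finset.sum_add_distrib, Finset.sum_add_distrib]
    _ ≤ A₁.ncard.choose 2 + A₂.ncard.choose 2 + A₃.ncard.choose 2 := by
        gcongr <;> refine sum_choose_two_ncard_inter_le 𝓕 (hpart_fin _ ?_) hpairwise <;>
          intro x hx <;> simp [hx]
    _ = _ := by simp only [Nat.choose_two_right]

/-- Counting bound for a 3-partition: the sum of `f(|F|)` over all facet-defining flats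
`F` of rank 2 is at most `e(|A₁|) + e(|A₂|) + e(|A₃|)`, where `e(k) = k(k-1)/2` and
`f(n) = ⌊n/2⌋⌊(n-1)/2⌋`. -/
theorem three_partition_count_bound (M : Matroid α) (hfin : M.E.Finite)
    (hconn : Conn M) (hsimple : IsSimple M) (hrank : rk M M.E = 3)
    (A₁ A₂ A₃ : Set α) (hpart : ThreePartition M A₁ A₂ A₃)
    (𝓕 : Finset (Set α)) (h𝓕 : ∀ F : Set α, F ∈ 𝓕 ↔ FacetFlat2 M F) :
    ∑ F ∈ 𝓕, (F.ncard / 2) * ((F.ncard - 1) / 2) ≤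
      A₁.ncard * (A₁.ncard - 1) / 2 + A₂.ncard * (A₂.ncard - 1) / 2 +
        A₃.ncard * (A₃.ncard - 1) / 2 :=
  three_partition_count_bound_general M hfin hsimple A₁ A₂ A₃ hpart 𝓕 h𝓕

end PaperWMO
end
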